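/- arXiv:math/0606481 — 4 statements merged into one kernel-verified Lean document; each statement's English description precedes it below -/
import Mathlib

section
/- For every permutation π of {1,...,n}, there is a bijection from partitions λ with at most n parts to partitions μ with at most n parts such that the pair (μ, π) is a standard labeled partition, and the bijection satisfies |λ| + maj(π) = |μ|. -/
open Finset

def maj {n : ℕ} (π : Equiv.Perm (Fin n)) : ℕ :=
  ∑ i ∈ Finset.range n, if h : i + 1 < n then
    (if π ⟨i + 1, h⟩ < π ⟨i, Nat.lt_of_succ_lt h⟩ then i + 1 else 0) else 0

/-- A labeled partition `(μ, π)` is standard if `π i > π (i+1)` implies `μ i > μ (i+1)`. -/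
def IsStandard {n : ℕ} (μ : Fin n → ℕ) (π : Equiv.Perm (Fin n)) : Prop :=
  ∀ i : ℕ, ∀ h : i + 1 < n,
    π ⟨i + 1, h⟩ < π ⟨i, Nat.lt_of_succ_lt h⟩ → μ ⟨i + 1, h⟩ < μ ⟨i, Nat.lt_of_succ_lt h⟩

/-!
Let `dᵢ` be the number of descents of `π` at positions `≥ i`. For antitone `μ`, the pair
`(μ, π)` is standard iff `μ i - μ (i+1) ≥ [π has a descent at i]` for every `i`, and `d` has
exactly these adjacent differences and last entry `0`. Hence `d` is the least standard `μ`, and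
`λ ↦ λ + d` is a bijection from partitions onto standard ones, with inverse `μ ↦ μ - d`.
Finally `∑ dᵢ = ∑ⱼ (j + 1) [descent at j] = maj π` (positions are `0`-based).
-/

lemma Fin.antitone_iff_mk_succ_le {α : Type*} [Preorder α] {n : ℕ} (f : Fin n → α) :
    Antitone f ↔ ∀ i : ℕ, ∀ h : i + 1 < n, f ⟨i + 1, h⟩ ≤ f ⟨i, Nat.lt_of_succ_lt h⟩ := by
  cases n with
  | zero => exact ⟨fun _ i h => absurd h (by omega), fun _ a => a.elim0⟩
  | succ n =>
    rw [Fin.antitone_iff_succ_le]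
    exact ⟨fun hf i h => hf ⟨i, by omega⟩, fun hf i => hf i (Nat.succ_lt_succ i.2)⟩

def descent {n : ℕ} (π : Equiv.Perm (Fin n)) (j : ℕ) : ℕ :=
  if h : j + 1 < n then
    (if π ⟨j + 1, h⟩ < π ⟨j, Nat.lt_of_succ_lt h⟩ then 1 else 0) else 0

def descentsFrom {n : ℕ} (π : Equiv.Perm (Fin n)) (k : ℕ) : ℕ :=
  ∑ j ∈ Ico k n, descent π j

def minStandard {n : ℕ} (π : Equiv.Perm (Fin n)) : Fin n → ℕ :=
  fun i => descentsFrom π i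

section

variable {n : ℕ} (π : Equiv.Perm (Fin n))

lemma descentsFrom_eq_descent_add {k : ℕ} (hk : k < n) :
    descentsFrom π k = descent π k + descentsFrom π (k + 1) :=
  sum_eq_sum_Ico_succ_bot hk _

lemma descentsFrom_sub_one : descentsFrom π (n - 1) = 0 := by
  refine sum_eq_zero fun j hj => ?_
  rw [mem_Ico] at hj
  exact dif_neg (by omega)

lemma maj_eq_sum_mul_descent : maj π = ∑ j ∈ range n, (j + 1) * descent π j := by
  refine sum_congr rfl fun j _ => ?_
  unfold descent
  split_ifs <;> simp

lemma sum_minStandard : ∑ i, minStandard π i = maj π := by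
  change ∑ i : Fin n, descentsFrom π i = _
  rw [Fin.sum_univ_eq_sum_range (descentsFrom π), maj_eq_sum_mul_descent, range_eq_Ico]
  simp only [descentsFrom]
  rw [sum_Ico_Ico_comm]
  refine sum_congr rfl fun j _ => ?_
  rw [sum_const, Nat.card_Ico, smul_eq_mul, Nat.sub_zero]

lemma antitone_and_isStandard_iff (g : Fin n → ℕ) :
    Antitone g ∧ IsStandard g π ↔
      ∀ i : ℕ, ∀ h : i + 1 < n, g ⟨i + 1, h⟩ + descent π i ≤ g ⟨i, Nat.lt_of_succ_lt h⟩ := by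
  rw [Fin.antitone_iff_mk_succ_le, IsStandard, ← forall₂_and]
  refine forall₂_congr fun i h => ?_
  rw [descent, dif_pos h]
  split_ifs <;> grind

lemma antitone_and_isStandard_add_minStandard_iff (f : Fin n → ℕ) :
    Antitone (f + minStandard π) ∧ IsStandard (f + minStandard π) π ↔ Antitone f := by
  rw [antitone_and_isStandard_iff, Fin.antitone_iff_mk_succ_le]
  refine forall₂_congr fun i h => ?_
  simp only [Pi.add_apply, minStandard, descentsFrom_eq_descent_add π (Nat.lt_of_succ_lt h)]
  omega

lemma minStandard_le {g : Fin n → ℕ} (hg : Antitone g) (hs : IsStandard g π) :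
    minStandard π ≤ g := by
  have hstep := (antitone_and_isStandard_iff π g).1 ⟨hg, hs⟩
  have hanti : Antitone fun i => (g i : ℤ) - minStandard π i := by
    refine (Fin.antitone_iff_mk_succ_le _).2 fun i h => ?_
    have := hstep i h
    simp only [minStandard, descentsFrom_eq_descent_add π (Nat.lt_of_succ_lt h)]
    omega
  intro i
  have hlast := hanti (show i ≤ ⟨n - 1, Nat.sub_one_lt_of_lt i.2⟩ from
    Fin.le_def.2 (Nat.le_sub_one_of_lt i.2))
  simp only [minStandard, descentsFrom_sub_one] at hlast ⊢
  omega

end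

/-- For every permutation `π ∈ S_n` there is a bijection `λ ↦ μ` from partitions with at
most `n` parts to partitions `μ` such that `(μ, π)` is standard, with `|λ| + maj π = |μ|`. -/
theorem exists_bijection_partitions_standard (n : ℕ) (π : Equiv.Perm (Fin n)) :
    ∃ F : {f : Fin n → ℕ // Antitone f} ≃
        {g : Fin n → ℕ // Antitone g ∧ IsStandard g π},
      ∀ l : {f : Fin n → ℕ // Antitone f},
        (∑ i, l.1 i) + maj π = ∑ i, (F l).1 i := by
  have hsub_add (g : {g : Fin n → ℕ // Antitone g ∧ IsStandard g π}) :
      g.1 - minStandard π + minStandard π = g.1 :=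
    tsub_add_cancel_of_le (minStandard_le π g.2.1 g.2.2)
  refine ⟨{
    toFun := fun f => ⟨f.1 + minStandard π,
      (antitone_and_isStandard_add_minStandard_iff π f.1).2 f.2⟩
    invFun := fun g => ⟨g.1 - minStandard π,
      (antitone_and_isStandard_add_minStandard_iff π _).1 (by rw [hsub_add]; exact g.2)⟩
    left_inv := fun f => Subtype.ext (add_tsub_cancel_right f.1 _)
    right_inv := fun g => Subtype.ext (hsub_add g) }, fun f => ?_⟩
  simp only [Equiv.coe_fn_mk, Pi.add_apply, sum_add_distrib, sum_minStandard]
end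

section
/- For a fixed permutation π of {1,...,n}, the map sending a partition λ with at most n parts to the sequence μ defined by μ_i = λ_i + φ_i, where φ_i is the number of descents of π among positions i, i+1, ..., n-1, produces a weakly decreasing sequence μ, the pair (μ, π) is a standard labeled partition, and this map is injective with |μ| = |λ| + maj(π). -/
/-!
`φ_i - φ_{i+1}` is the indicator of a descent at `i`, so `φ` is weakly decreasing and drops
exactly at the descents of `π`; adding it to a partition therefore gives a standard labeled
partition. Summing `φ` counts a descent at (0-based) position `j` once for each `i ≤ j`,
that is `j + 1` times, which is its contribution to `maj π`.
-/
open Finset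

/-- `phi π i` is the number of descents of `π` among positions `i, i+1, …, n-1`
(0-based index `i`, descents counted in the suffix starting at entry `i`). -/
def phi {n : ℕ} (π : Equiv.Perm (Fin n)) (i : Fin n) : ℕ :=
  ∑ j ∈ Finset.range n, if h : j + 1 < n then
    (if i.1 ≤ j ∧ π ⟨j + 1, h⟩ < π ⟨j, Nat.lt_of_succ_lt h⟩ then 1 else 0) else 0

lemma sum_fin_sum_range_ite_le {M : Type*} [AddCommMonoid M] (n : ℕ) (f : ℕ → M) :
    ∑ i : Fin n, ∑ j ∈ range n, (if i.1 ≤ j then f j else 0) = ∑ j ∈ range n, (j + 1) • f j := by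
  rw [sum_comm]
  refine sum_congr rfl fun j hj => ?_
  have : (range n).filter (· ≤ j) = range (j + 1) := by
    ext x
    simp only [mem_filter, mem_range] at hj ⊢
    omega
  rw [Fin.sum_univ_eq_sum_range (fun i => if i ≤ j then f j else 0), ← sum_filter, this,
    sum_const, card_range]

section Descents

variable {n : ℕ} (π : Equiv.Perm (Fin n))

def descentIndicator (j : ℕ) : ℕ :=
  if h : j + 1 < n then (if π ⟨j + 1, h⟩ < π ⟨j, Nat.lt_of_succ_lt h⟩ then 1 else 0) else 0

lemma descentIndicator_eq_one {i : ℕ} (h : i + 1 < n)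
    (hd : π ⟨i + 1, h⟩ < π ⟨i, Nat.lt_of_succ_lt h⟩) :
    descentIndicator π i = 1 := by
  simp [descentIndicator, h, hd]

lemma maj_eq_sum_descentIndicator :
    maj π = ∑ j ∈ range n, (j + 1) * descentIndicator π j := by
  refine sum_congr rfl fun j _ => ?_
  unfold descentIndicator
  split_ifs <;> simp

lemma phi_eq_sum_descentIndicator (i : Fin n) :
    phi π i = ∑ j ∈ range n, if i.1 ≤ j then descentIndicator π j else 0 := by
  refine sum_congr rfl fun j _ => ?_
  unfold descentIndicator
  split_ifs <;> simp_all

lemma phi_antitone : Antitone (phi π) := by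
  intro a b hab
  simp only [phi_eq_sum_descentIndicator]
  refine sum_le_sum fun j _ => ?_
  split_ifs with hb ha
  · rfl
  · exact absurd ((Fin.le_iff_val_le_val.mp hab).trans hb) ha
  · exact Nat.zero_le _
  · rfl

lemma phi_eq_phi_succ_add (i : ℕ) (h : i + 1 < n) :
    phi π ⟨i, Nat.lt_of_succ_lt h⟩ = phi π ⟨i + 1, h⟩ + descentIndicator π i := by
  have split_at_i : ∀ j, (if i ≤ j then descentIndicator π j else 0) =
      (if i + 1 ≤ j then descentIndicator π j else 0) +
        (if i = j then descentIndicator π j else 0) := by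
    intro j
    split_ifs <;> omega
  simp only [phi_eq_sum_descentIndicator, split_at_i, sum_add_distrib, sum_ite_eq,
    mem_range.mpr (Nat.lt_of_succ_lt h), if_true]

lemma sum_phi : ∑ i, phi π i = maj π := by
  simp only [phi_eq_sum_descentIndicator, sum_fin_sum_range_ite_le, smul_eq_mul,
    maj_eq_sum_descentIndicator]

lemma isStandard_add_phi {l : Fin n → ℕ} (hl : Antitone l) :
    IsStandard (fun i => l i + phi π i) π := by
  intro i h hd
  have hl_succ := hl (show (⟨i, Nat.lt_of_succ_lt h⟩ : Fin n) ≤ ⟨i + 1, h⟩ from Nat.le_succ i)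
  have hphi := phi_eq_phi_succ_add π i h
  rw [descentIndicator_eq_one π h hd] at hphi
  simp only
  omega

end Descents

/-- MacMahon's map `λ ↦ λ + φ`: it yields a partition `μ` such that `(μ, π)` is standard,
it is injective on partitions, and `|μ| = |λ| + maj π`. -/
theorem macmahon_map_standard (n : ℕ) (π : Equiv.Perm (Fin n)) :
    (∀ l : Fin n → ℕ, Antitone l →
        Antitone (fun i => l i + phi π i) ∧ IsStandard (fun i => l i + phi π i) π) ∧
    (∀ l l' : Fin n → ℕ, Antitone l → Antitone l' →
        (fun i => l i + phi π i) = (fun i => l' i + phi π i) → l = l') ∧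
    (∀ l : Fin n → ℕ, ∑ i, (l i + phi π i) = (∑ i, l i) + maj π) := by
  refine ⟨fun l hl => ⟨hl.add (phi_antitone π), isStandard_add_phi π hl⟩, ?_, ?_⟩
  · exact fun l l' _ _ heq => funext fun i => Nat.add_right_cancel (congrFun heq i)
  · intro l
    rw [sum_add_distrib, sum_phi]
end

section
/- There is a weight-preserving bijection between sequences (a_1,...,a_n) of nonnegative integers and pairs (λ, π) where λ is a partition with at most n parts and π ∈ S_n, such that a_1 + ··· + a_n = |λ| + maj(π). -/
open Finset

namespace MajBij

variable {n : ℕ}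

/-- Indicator of a descent of `π` at position `i`. -/
def desI (π : Equiv.Perm (Fin n)) (i : ℕ) : ℕ :=
  if h : i + 1 < n then
    (if π ⟨i + 1, h⟩ < π ⟨i, Nat.lt_of_succ_lt h⟩ then 1 else 0) else 0

/-- Number of descents of `π` at positions `≥ i`. -/
def dct (π : Equiv.Perm (Fin n)) (i : ℕ) : ℕ := ∑ j ∈ Finset.Ico i n, desI π j

lemma desI_le_one (π : Equiv.Perm (Fin n)) (i : ℕ) : desI π i ≤ 1 := by
  unfold desI; split_ifs <;> simp

lemma maj_eq (π : Equiv.Perm (Fin n)) :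
    maj π = ∑ i ∈ Finset.range n, (i + 1) * desI π i := by
  unfold maj desI
  refine Finset.sum_congr rfl fun i _ => ?_
  split_ifs <;> simp

lemma dct_rec (π : Equiv.Perm (Fin n)) {i : ℕ} (h : i < n) :
    dct π i = desI π i + dct π (i + 1) :=
  Finset.sum_eq_sum_Ico_succ_bot h _

lemma dct_eq_zero (π : Equiv.Perm (Fin n)) {i : ℕ} (h : n ≤ i) : dct π i = 0 := by
  unfold dct
  rw [Finset.Ico_eq_empty (by omega), Finset.sum_empty]

lemma sum_dct (π : Equiv.Perm (Fin n)) :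
    ∑ i ∈ Finset.range n, dct π i = maj π := by
  rw [maj_eq]
  unfold dct
  have h1 : ∀ i ∈ Finset.range n, ∑ j ∈ Finset.Ico i n, desI π j
      = ∑ j ∈ Finset.range n, if i ≤ j then desI π j else 0 := by
    intro i _
    rw [Finset.sum_ite, Finset.sum_const_zero, add_zero]
    apply Finset.sum_congr _ (fun _ _ => rfl)
    ext j
    simp [Finset.mem_Ico, and_comm]
  rw [Finset.sum_congr rfl h1, Finset.sum_comm]
  refine Finset.sum_congr rfl fun j hj => ?_
  rw [Finset.sum_ite, Finset.sum_const_zero, add_zero, Finset.sum_const, smul_eq_mul]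
  congr 1
  have : Finset.filter (fun i => i ≤ j) (Finset.range n) = Finset.range (j + 1) := by
    ext i
    simp only [Finset.mem_filter, Finset.mem_range]
    simp only [Finset.mem_range] at hj
    omega
  rw [this, Finset.card_range]

lemma desI_eq_zero (π : Equiv.Perm (Fin n)) {i : ℕ} (h : ¬ i + 1 < n) : desI π i = 0 := by
  unfold desI; rw [dif_neg h]

lemma desI_pos_iff (π : Equiv.Perm (Fin n)) {i : ℕ} (h : i + 1 < n) :
    desI π i = if π ⟨i + 1, h⟩ < π ⟨i, Nat.lt_of_succ_lt h⟩ then 1 else 0 := by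
  unfold desI; rw [dif_pos h]

/-- The sorting permutation: sorts `a` into weakly decreasing order, breaking ties
by increasing index. -/
def sortP (a : Fin n → ℕ) : Equiv.Perm (Fin n) :=
  Tuple.sort (fun k => OrderDual.toDual (a k))

lemma sortP_antitone (a : Fin n → ℕ) : Antitone (a ∘ (sortP a)) := by
  intro i j hij
  exact Tuple.monotone_sort (fun k => OrderDual.toDual (a k)) hij

lemma sortP_ties (a : Fin n → ℕ) (i j : Fin n) (hij : i < j)
    (he : a (sortP a i) = a (sortP a j)) : sortP a i < sortP a j := by
  have h := (Tuple.eq_sort_iff (f := fun k => OrderDual.toDual (a k))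
    (σ := sortP a)).mp rfl
  exact h.2 i j hij (congrArg OrderDual.toDual he)

lemma stepA (a : Fin n → ℕ) {i : ℕ} (h : i + 1 < n) :
    a (sortP a ⟨i + 1, h⟩) + desI (sortP a) i ≤ a (sortP a ⟨i, Nat.lt_of_succ_lt h⟩) := by
  have hle : a (sortP a ⟨i + 1, h⟩) ≤ a (sortP a ⟨i, Nat.lt_of_succ_lt h⟩) :=
    sortP_antitone a (by simp [Fin.le_def])
  rw [desI_pos_iff _ h]
  split_ifs with hd
  · rcases lt_or_eq_of_le hle with h' | h'
    · omega
    · exfalso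
      have := sortP_ties a ⟨i, Nat.lt_of_succ_lt h⟩ ⟨i + 1, h⟩ (by simp [Fin.lt_def]) h'.symm
      exact absurd this (not_lt.mpr hd.le)
  · omega

lemma dct_le_aux (a : Fin n → ℕ) : ∀ (k i : ℕ) (h : i < n), n - i ≤ k →
    dct (sortP a) i ≤ a (sortP a ⟨i, h⟩) := by
  intro k
  induction k with
  | zero => intro i h hk; omega
  | succ k ih =>
    intro i h hk
    rw [dct_rec _ h]
    by_cases h1 : i + 1 < n
    · have hih := ih (i + 1) h1 (by omega)
      have hA := stepA a h1
      omega
    · have h0 : desI (sortP a) i = 0 := desI_eq_zero _ h1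
      have h2 : dct (sortP a) (i + 1) = 0 := dct_eq_zero _ (by omega)
      omega

lemma dct_le (a : Fin n → ℕ) (i : Fin n) : dct (sortP a) i.val ≤ a (sortP a i) := by
  have := dct_le_aux a (n - i.val) i.val i.isLt le_rfl
  simpa using this

/-- The partition associated with `a`. -/
def lam (a : Fin n → ℕ) (i : Fin n) : ℕ := a (sortP a i) - dct (sortP a) i.val

lemma antitone_of_step {f : Fin n → ℕ}
    (h : ∀ (i : ℕ) (hi : i + 1 < n), f ⟨i + 1, hi⟩ ≤ f ⟨i, Nat.lt_of_succ_lt hi⟩) :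
    Antitone f := by
  have key : ∀ (k : ℕ) (i j : Fin n), (j : ℕ) = (i : ℕ) + k → f j ≤ f i := by
    intro k
    induction k with
    | zero =>
      intro i j hij
      have : i = j := Fin.ext (by omega)
      rw [this]
    | succ k ih =>
      intro i j hij
      have h1 : (i : ℕ) + k < n := by omega
      have h2 : f j ≤ f ⟨(i : ℕ) + k, h1⟩ := by
        have hh := h ((i : ℕ) + k) (by omega)
        have hj : j = ⟨(i : ℕ) + k + 1, by omega⟩ :=
          Fin.ext (show (j : ℕ) = (i : ℕ) + k + 1 by omega)
        rw [hj]; exact hh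
      exact h2.trans (ih i ⟨(i : ℕ) + k, h1⟩ rfl)
  intro i j hij
  exact key ((j : ℕ) - (i : ℕ)) i j (by omega)

lemma lam_antitone (a : Fin n → ℕ) : Antitone (lam a) := by
  apply antitone_of_step
  intro i hi
  have hB : dct (sortP a) (i + 1) ≤ a (sortP a ⟨i + 1, hi⟩) := dct_le a ⟨i + 1, hi⟩
  have hA := stepA a hi
  have hrec := dct_rec (sortP a) (Nat.lt_of_succ_lt hi)
  unfold lam
  simp only
  omega

lemma lt_of_step_chain {g : Fin n → Fin n} {i j : Fin n} (hij : i < j)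
    (h : ∀ (k : ℕ) (hk : k + 1 < n), (i : ℕ) ≤ k → k + 1 ≤ (j : ℕ) →
      g ⟨k, Nat.lt_of_succ_lt hk⟩ < g ⟨k + 1, hk⟩) :
    g i < g j := by
  have key : ∀ (m : ℕ) (j' : Fin n), (j' : ℕ) = (i : ℕ) + m + 1 → (j' : ℕ) ≤ (j : ℕ) →
      g i < g j' := by
    intro m
    induction m with
    | zero =>
      intro j' hj' hle
      have hk : (i : ℕ) + 1 < n := by have := j'.isLt; omega
      have := h (i : ℕ) hk le_rfl (by omega)
      have e1 : (⟨(i : ℕ), Nat.lt_of_succ_lt hk⟩ : Fin n) = i := Fin.ext rfl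
      have e2 : (⟨(i : ℕ) + 1, hk⟩ : Fin n) = j' :=
        Fin.ext (show (i : ℕ) + 1 = (j' : ℕ) by omega)
      rwa [e1, e2] at this
    | succ m ih =>
      intro j' hj' hle
      have hk : (i : ℕ) + m + 1 + 1 < n := by have := j'.isLt; omega
      have hmid : g i < g ⟨(i : ℕ) + m + 1, Nat.lt_of_succ_lt hk⟩ :=
        ih ⟨(i : ℕ) + m + 1, Nat.lt_of_succ_lt hk⟩ rfl
          (show (i : ℕ) + m + 1 ≤ (j : ℕ) by omega)
      have hstep := h ((i : ℕ) + m + 1) hk (by omega) (by omega)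
      have e2 : (⟨(i : ℕ) + m + 1 + 1, hk⟩ : Fin n) = j' :=
        Fin.ext (show (i : ℕ) + m + 1 + 1 = (j' : ℕ) by omega)
      rw [e2] at hstep
      exact hmid.trans hstep
  have hlt : (i : ℕ) < (j : ℕ) := hij
  exact key ((j : ℕ) - (i : ℕ) - 1) j (by omega) le_rfl

/-- The forward map of the bijection. -/
def Fmap (a : Fin n → ℕ) : {f : Fin n → ℕ // Antitone f} × Equiv.Perm (Fin n) :=
  (⟨lam a, lam_antitone a⟩, sortP a)

/-- The inverse map of the bijection. -/
def Gmap (p : {f : Fin n → ℕ // Antitone f} × Equiv.Perm (Fin n)) : Fin n → ℕ :=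
  fun k => p.1.1 (p.2⁻¹ k) + dct p.2 ((p.2⁻¹ k : Fin n) : ℕ)

lemma Gmap_Fmap (a : Fin n → ℕ) : Gmap (Fmap a) = a := by
  funext k
  show lam a ((sortP a)⁻¹ k) + dct (sortP a) (((sortP a)⁻¹ k : Fin n) : ℕ) = a k
  unfold lam
  rw [Nat.sub_add_cancel (dct_le a _), Equiv.Perm.inv_def, Equiv.apply_symm_apply]

lemma Fmap_Gmap (p : {f : Fin n → ℕ // Antitone f} × Equiv.Perm (Fin n)) :
    Fmap (Gmap p) = p := by
  obtain ⟨⟨l, hl⟩, π⟩ := p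
  set b : Fin n → ℕ := fun i => l i + dct π (i : ℕ) with hb
  have hGb : ∀ i : Fin n, Gmap (⟨l, hl⟩, π) (π i) = b i := by
    intro i
    show l (π⁻¹ (π i)) + dct π ((π⁻¹ (π i) : Fin n) : ℕ) = _
    rw [Equiv.Perm.inv_def, Equiv.symm_apply_apply]
  have hb_step : ∀ (i : ℕ) (hi : i + 1 < n),
      b ⟨i + 1, hi⟩ + desI π i ≤ b ⟨i, Nat.lt_of_succ_lt hi⟩ := by
    intro i hi
    have h1 : l ⟨i + 1, hi⟩ ≤ l ⟨i, Nat.lt_of_succ_lt hi⟩ := hl (by simp [Fin.le_def])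
    have hrec := dct_rec π (Nat.lt_of_succ_lt hi)
    simp only [hb]
    omega
  have hb_anti : Antitone b := antitone_of_step (fun i hi => by
    have := hb_step i hi
    omega)
  have hsort : π = Tuple.sort (fun k => OrderDual.toDual (Gmap (⟨l, hl⟩, π) k)) := by
    rw [Tuple.eq_sort_iff]
    constructor
    · intro i j hij
      have hba : Gmap (⟨l, hl⟩, π) (π j) ≤ Gmap (⟨l, hl⟩, π) (π i) := by
        rw [hGb, hGb]; exact hb_anti hij
      exact OrderDual.toDual_le_toDual.mpr hba
    · intro i j hij he
      have hbe : b i = b j := by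
        have := OrderDual.toDual_inj.mp he
        rwa [hGb, hGb] at this
      refine lt_of_step_chain hij ?_
      intro k hk hik hkj
      have hik' : i ≤ (⟨k, Nat.lt_of_succ_lt hk⟩ : Fin n) := by
        simpa [Fin.le_def] using hik
      have hkj' : (⟨k + 1, hk⟩ : Fin n) ≤ j := by simpa [Fin.le_def] using hkj
      have hsand1 : b j ≤ b ⟨k + 1, hk⟩ := hb_anti hkj'
      have hsand2 : b ⟨k + 1, hk⟩ ≤ b ⟨k, Nat.lt_of_succ_lt hk⟩ :=
        hb_anti (by simp [Fin.le_def])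
      have hsand3 : b ⟨k, Nat.lt_of_succ_lt hk⟩ ≤ b i := hb_anti hik'
      have hbk : b ⟨k + 1, hk⟩ = b ⟨k, Nat.lt_of_succ_lt hk⟩ := by omega
      have hdes : desI π k = 0 := by
        by_contra hc
        have := hb_step k hk
        have h1 := desI_le_one π k
        omega
      rw [desI_pos_iff π hk] at hdes
      have hnlt : ¬ π ⟨k + 1, hk⟩ < π ⟨k, Nat.lt_of_succ_lt hk⟩ := by
        intro hcon; rw [if_pos hcon] at hdes; omega
      have hne : π ⟨k, Nat.lt_of_succ_lt hk⟩ ≠ π ⟨k + 1, hk⟩ := by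
        intro hcon
        have h2 : k = k + 1 := congrArg Fin.val (π.injective hcon)
        omega
      exact lt_of_le_of_ne (not_lt.mp hnlt) hne
  have hsP : sortP (Gmap (⟨l, hl⟩, π)) = π := by
    unfold sortP
    exact hsort.symm
  unfold Fmap
  refine Prod.ext ?_ ?_
  · apply Subtype.ext
    funext i
    show Gmap (⟨l, hl⟩, π) (sortP (Gmap (⟨l, hl⟩, π)) i)
        - dct (sortP (Gmap (⟨l, hl⟩, π))) (i : ℕ) = l i
    rw [hsP, hGb]
    simp [hb]
  · exact hsP

end MajBij

/-- A weight-preserving bijection between sequences of `n` nonnegative integers and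
pairs `(λ, π)` of a partition with at most `n` parts and a permutation `π ∈ S_n`,
with `a_1 + ⋯ + a_n = |λ| + maj π`. -/
theorem exists_bijection_seq_partition_perm (n : ℕ) :
    ∃ F : (Fin n → ℕ) ≃ ({f : Fin n → ℕ // Antitone f} × Equiv.Perm (Fin n)),
      ∀ a : Fin n → ℕ, ∑ i, a i = (∑ i, (F a).1.1 i) + maj (F a).2 := by
  refine ⟨⟨MajBij.Fmap, MajBij.Gmap, MajBij.Gmap_Fmap, MajBij.Fmap_Gmap⟩, ?_⟩
  intro a
  show ∑ i, a i = (∑ i, MajBij.lam a i) + maj (MajBij.sortP a)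
  have h1 : ∑ i, a i = ∑ i, a (MajBij.sortP a i) := (Equiv.sum_comp (MajBij.sortP a) a).symm
  have h2 : ∀ i : Fin n, a (MajBij.sortP a i) =
      MajBij.lam a i + MajBij.dct (MajBij.sortP a) (i : ℕ) := by
    intro i
    unfold MajBij.lam
    rw [Nat.sub_add_cancel (MajBij.dct_le a i)]
  rw [h1, Finset.sum_congr rfl (fun i _ => h2 i), Finset.sum_add_distrib]
  congr 1
  rw [← MajBij.sum_dct (MajBij.sortP a)]
  exact Fin.sum_univ_eq_sum_range (fun i => MajBij.dct (MajBij.sortP a) i) n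
end

section
/- Let (μ, π) be a standard labeled partition with π ∈ S_n, let j_1 < ··· < j_k be the derangement points of π, and set β = (μ_{j_1}, ..., μ_{j_k}) and σ = dp(π). Then (β, σ) is a standard labeled partition. -/
open Finset

/-- The set of derangement points (non-fixed points) of a permutation. -/
def derSet {n : ℕ} (π : Equiv.Perm (Fin n)) : Finset (Fin n) :=
  Finset.univ.filter (fun i => π i ≠ i)

/-- The derangement part of `π`: the permutation of `Fin k` induced by the relative
order of the values of `π` at its derangement points (listed in increasing position order). -/
def dp {n : ℕ} (π : Equiv.Perm (Fin n)) {k : ℕ} (h : (derSet π).card = k) :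
    Equiv.Perm (Fin k) :=
  (((derSet π).orderIsoOfFin h).toEquiv.permCongr).symm
    (π.subtypePerm (fun x => by
      simp only [derSet, Finset.mem_filter, Finset.mem_univ, true_and]
      exact not_congr (Equiv.apply_eq_iff_eq π)))

/-- `dp π = σ`, stated heterogeneously. -/
def dpEq {n k : ℕ} (π : Equiv.Perm (Fin n)) (σ : Equiv.Perm (Fin k)) : Prop :=
  ∃ h : (derSet π).card = k, dp π h = σ

/- Between two inverted positions `π` has a descent, where `μ` drops strictly. -/
theorem IsStandard.lt_of_inversion {n : ℕ} {μ : Fin n → ℕ} {π : Equiv.Perm (Fin n)}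
    (hμ : Antitone μ) (hstd : IsStandard μ π) {i j : Fin n} (hij : i < j) (hπ : π j < π i) :
    μ j < μ i := by
  obtain ⟨i, hi⟩ := i
  obtain ⟨j, hj⟩ := j
  rw [Fin.mk_lt_mk] at hij
  induction j, hij using Nat.le_induction with
  | base => exact hstd i hj hπ
  | succ j hij ih =>
    have hjn : j < n := by omega
    have hne : (⟨j + 1, hj⟩ : Fin n) ≠ ⟨j, hjn⟩ := by simp
    rcases lt_or_gt_of_ne (π.injective.ne hne) with hdesc | hasc
    · calc μ ⟨j + 1, hj⟩ < μ ⟨j, hjn⟩ := hstd j hj hdesc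
        _ ≤ μ ⟨i, hi⟩ := hμ (Fin.mk_le_mk.2 (by omega))
    · calc μ ⟨j + 1, hj⟩ ≤ μ ⟨j, hjn⟩ := hμ (Fin.mk_le_mk.2 (Nat.le_succ j))
        _ < μ ⟨i, hi⟩ := ih hjn (hasc.trans hπ)

theorem IsStandard.comp_strictMono {n k : ℕ} {μ : Fin n → ℕ} {π : Equiv.Perm (Fin n)}
    (hμ : Antitone μ) (hstd : IsStandard μ π) {f : Fin k → Fin n} (hf : StrictMono f)
    {σ : Equiv.Perm (Fin k)} (hσ : ∀ x y, σ x < σ y → π (f x) < π (f y)) :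
    IsStandard (μ ∘ f) σ :=
  fun i _ hlt => hstd.lt_of_inversion hμ (hf (Fin.mk_lt_mk.2 i.lt_succ_self)) (hσ _ _ hlt)

theorem coe_orderIsoOfFin_dp_apply {n k : ℕ} (π : Equiv.Perm (Fin n))
    (h : (derSet π).card = k) (x : Fin k) :
    ((derSet π).orderIsoOfFin h (dp π h x) : Fin n) = π ((derSet π).orderIsoOfFin h x) := by
  simp [dp, Equiv.permCongr_symm, Equiv.permCongr_apply]

theorem dp_lt_dp_iff {n k : ℕ} (π : Equiv.Perm (Fin n)) (h : (derSet π).card = k)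
    (x y : Fin k) :
    dp π h x < dp π h y ↔
      π ((derSet π).orderIsoOfFin h x) < π ((derSet π).orderIsoOfFin h y) := by
  rw [← ((derSet π).orderIsoOfFin h).lt_iff_lt, ← Subtype.coe_lt_coe,
    coe_orderIsoOfFin_dp_apply, coe_orderIsoOfFin_dp_apply]

/-- If `(μ, π)` is a standard labeled partition and `β` consists of the entries of `μ`
at the derangement points of `π` (in increasing position order), then `(β, dp π)` is a
standard labeled partition. -/
theorem restriction_to_derangement_points_standard (n k : ℕ)
    (μ : Fin n → ℕ) (π : Equiv.Perm (Fin n)) (hμ : Antitone μ)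
    (hstd : IsStandard μ π) (h : (derSet π).card = k) :
    Antitone (fun j : Fin k => μ ((derSet π).orderIsoOfFin h j)) ∧
      IsStandard (fun j : Fin k => μ ((derSet π).orderIsoOfFin h j)) (dp π h) := by
  have he : StrictMono fun j : Fin k => ((derSet π).orderIsoOfFin h j : Fin n) :=
    fun _ _ hxy => ((derSet π).orderIsoOfFin h).strictMono hxy
  exact ⟨hμ.comp_monotone he.monotone,
    hstd.comp_strictMono hμ he fun x y => (dp_lt_dp_iff π h x y).1⟩
end
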